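/- Let t ≥ 1, let n₁,…,n_t ≥ 1 with n = n₁+⋯+n_t, and let m₁,…,m_t satisfy the invariant conditions for one shift-minimal winning vector (1 ≤ m₁ ≤ n₁; and, if t ≥ 2, 1 ≤ m_h ≤ n_h−1 for 2 ≤ h ≤ t−1 and 0 ≤ m_t ≤ n_t−1) and assume m_t ≥ 1 (no null players). For 1 ≤ j ≤ i ≤ t define a_{i,j} := max{0, min{n_j, −1 + Σ_{h=1}^{i} m_h − Σ_{h=1}^{j−1} n_h}}, and for j > i define a_{i,j} := n_j; let ã_i = (a_{i,1},…,a_{i,t}) for i = 1,…,t. Then the set of shift-maximal losing vectors of the complete game with minimum (m₁,…,m_t) is exactly {ã_1, …, ã_t}. -/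

import Mathlib

open Finset

/-- A vector `x` (with `x j` players of block `j`) is winning in the complete game with
minimum `(m₁,…,m_t)` iff `Σ_{h=1}^{k} x_h ≥ Σ_{h=1}^{k} m_h` for every `k`. -/
def VecWinning {t : ℕ} (mvec x : Fin t → ℕ) : Prop :=
  ∀ k : Fin t, (∑ h ∈ Finset.Iic k, mvec h) ≤ ∑ h ∈ Finset.Iic k, x h

/-- The shift order on vectors: `x ⪯ y` iff all partial sums of `x` are dominated by those of `y`. -/
def VecLE {t : ℕ} (x y : Fin t → ℕ) : Prop :=
  ∀ k : Fin t, (∑ h ∈ Finset.Iic k, x h) ≤ ∑ h ∈ Finset.Iic k, y h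

/-- `x` is a shift-maximal losing vector: it is a losing vector and every different vector `y`
with `x ⪯ y` (and `y j ≤ nvec j`) is winning. -/
def IsShiftMaxLosing {t : ℕ} (nvec mvec x : Fin t → ℕ) : Prop :=
  (∀ j, x j ≤ nvec j) ∧ ¬ VecWinning mvec x ∧
    ∀ y : Fin t → ℕ, (∀ j, y j ≤ nvec j) → VecLE x y → y ≠ x → VecWinning mvec y

/-- The vector `ã_i`: `a_{i,j} = max{0, min{n_j, -1 + Σ_{h≤i} m_h - Σ_{h<j} n_h}}` for `j ≤ i`,
and `a_{i,j} = n_j` for `j > i`. -/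
def avec {t : ℕ} (nvec mvec : Fin t → ℕ) (i j : Fin t) : ℕ :=
  if j ≤ i then
    (max 0 (min ((nvec j : ℤ))
      (-1 + ∑ h ∈ Finset.Iic i, (mvec h : ℤ) - ∑ h ∈ Finset.Iio j, (nvec h : ℤ)))).toNat
  else nvec j

section AuxSMLV

def psum {t : ℕ} (f : Fin t → ℤ) (k : ℕ) : ℤ :=
  ∑ h ∈ Finset.range k, if hh : h < t then f ⟨h, hh⟩ else 0

lemma psum_zero {t : ℕ} (f : Fin t → ℤ) : psum f 0 = 0 := rfl

lemma psum_succ {t : ℕ} (f : Fin t → ℤ) (k : ℕ) :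
    psum f (k + 1) = psum f k + if hh : k < t then f ⟨k, hh⟩ else 0 :=
  Finset.sum_range_succ _ _

lemma psum_succ' {t : ℕ} (f : Fin t → ℤ) (k : ℕ) (hk : k < t) :
    psum f (k + 1) = psum f k + f ⟨k, hk⟩ := by
  rw [psum, Finset.sum_range_succ, dif_pos hk]; rfl

lemma sum_Iic_psum_aux {t : ℕ} (f : Fin t → ℤ) :
    ∀ (k : ℕ) (hk : k < t), ∑ h ∈ Finset.Iic (⟨k, hk⟩ : Fin t), f h = psum f (k + 1) := by
  intro k
  induction k with
  | zero =>
    intro hk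
    have h1 : Finset.Iic (⟨0, hk⟩ : Fin t) = {⟨0, hk⟩} := by
      ext h
      simp only [Finset.mem_Iic, Finset.mem_singleton, Fin.le_def, Fin.ext_iff]
      omega
    rw [h1, Finset.sum_singleton, psum_succ' f 0 hk, psum_zero, zero_add]
  | succ j ih =>
    intro hk
    have hj : j < t := by omega
    have h1 : Finset.Iic (⟨j+1, hk⟩ : Fin t) = insert ⟨j+1, hk⟩ (Finset.Iic ⟨j, hj⟩) := by
      ext h
      simp only [Finset.mem_Iic, Finset.mem_insert, Fin.le_def, Fin.ext_iff]
      omega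
    have h2 : (⟨j+1, hk⟩ : Fin t) ∉ Finset.Iic (⟨j, hj⟩ : Fin t) := by
      simp [Fin.le_def]
    rw [h1, Finset.sum_insert h2, ih hj, psum_succ' f (j+1) hk]
    ring

lemma sum_Iic_psum {t : ℕ} (f : Fin t → ℤ) (k : Fin t) :
    ∑ h ∈ Finset.Iic k, f h = psum f (k.1 + 1) := by
  have := sum_Iic_psum_aux f k.1 k.2
  simpa using this

lemma sum_Iio_psum {t : ℕ} (f : Fin t → ℤ) (k : ℕ) (hk : k < t) :
    ∑ h ∈ Finset.Iio (⟨k, hk⟩ : Fin t), f h = psum f k := by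
  cases k with
  | zero =>
    have h1 : Finset.Iio (⟨0, hk⟩ : Fin t) = ∅ := by
      ext h; simp [Fin.lt_def]
    rw [h1, Finset.sum_empty, psum_zero]
  | succ j =>
    have hj : j < t := by omega
    have h1 : Finset.Iio (⟨j+1, hk⟩ : Fin t) = Finset.Iic (⟨j, hj⟩ : Fin t) := by
      ext h
      simp only [Finset.mem_Iio, Finset.mem_Iic, Fin.lt_def, Fin.le_def]
      omega
    rw [h1, sum_Iic_psum_aux f j hj]

lemma psum_diff_le {t : ℕ} {f g : Fin t → ℤ} (hfg : ∀ h, f h ≤ g h) :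
    ∀ j k : ℕ, j ≤ k → psum f k - psum f j ≤ psum g k - psum g j := by
  intro j k hjk
  induction k, hjk using Nat.le_induction with
  | base => omega
  | succ k hk ih =>
    rw [psum_succ f, psum_succ g]
    have h1 : (if hh : k < t then f ⟨k, hh⟩ else 0) ≤ (if hh : k < t then g ⟨k, hh⟩ else 0) := by
      split
      · exact hfg _
      · exact le_refl 0
    omega

lemma psum_zero_fun {t : ℕ} (k : ℕ) : psum (fun _ : Fin t => (0 : ℤ)) k = 0 := by
  simp [psum]

lemma psum_mono {t : ℕ} {f : Fin t → ℤ} (hf : ∀ h, 0 ≤ f h) {j k : ℕ} (hjk : j ≤ k) :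
    psum f j ≤ psum f k := by
  have h1 := psum_diff_le (f := fun _ : Fin t => (0 : ℤ)) (g := f) (fun h => hf h) j k hjk
  rw [psum_zero_fun, psum_zero_fun] at h1
  omega

lemma psum_ge_count {t : ℕ} {f : Fin t → ℤ} (hf : ∀ h, 1 ≤ f h) :
    ∀ j k : ℕ, j ≤ k → k ≤ t → psum f j + (k : ℤ) ≤ psum f k + (j : ℤ) := by
  intro j k hjk
  induction k, hjk using Nat.le_induction with
  | base => intro _; omega
  | succ k hk ih =>
    intro hkt
    have hklt : k < t := by omega
    have h1 := ih (by omega)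
    rw [psum_succ' f k hklt]
    have h2 := hf ⟨k, hklt⟩
    push_cast
    omega

lemma psum_gap {t : ℕ} {f g : Fin t → ℤ} (hfg : ∀ h : Fin t, 1 ≤ h.1 → f h + 1 ≤ g h) :
    ∀ j k : ℕ, 1 ≤ j → j ≤ k → k ≤ t →
      psum f k + (k : ℤ) + psum g j ≤ psum f j + (j : ℤ) + psum g k := by
  intro j k hj hjk
  induction k, hjk using Nat.le_induction with
  | base => intro _; omega
  | succ k hk ih =>
    intro hkt
    have hklt : k < t := by omega
    have h1 := ih (by omega)
    have h2 := hfg ⟨k, hklt⟩ (show 1 ≤ k by omega)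
    rw [psum_succ' f k hklt, psum_succ' g k hklt]
    push_cast
    omega

lemma avec_psum {t : ℕ} (nvec mvec : Fin t → ℕ) (hn : ∀ h, 1 ≤ nvec h)
    (hm : ∀ h, 1 ≤ mvec h)
    (hMN : ∀ k, 1 ≤ k → k ≤ t →
      psum (fun h => (mvec h : ℤ)) k + ((k : ℤ) - 1) ≤ psum (fun h => (nvec h : ℤ)) k)
    (i : Fin t) :
    ∀ k, k ≤ t → psum (fun h => ((avec nvec mvec i h : ℕ) : ℤ)) k =
      if k ≤ i.1 + 1 then
        min (psum (fun h => (nvec h : ℤ)) k) (psum (fun h => (mvec h : ℤ)) (i.1 + 1) - 1)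
      else psum (fun h => (mvec h : ℤ)) (i.1 + 1) - 1 +
        (psum (fun h => (nvec h : ℤ)) k - psum (fun h => (nvec h : ℤ)) (i.1 + 1)) := by
  have hit : i.1 + 1 ≤ t := i.2
  have hMi : (i.1 : ℤ) + 1 ≤ psum (fun h => (mvec h : ℤ)) (i.1 + 1) := by
    have h1 := psum_ge_count (f := fun h => (mvec h : ℤ))
      (fun h => show (1 : ℤ) ≤ (mvec h : ℤ) by exact_mod_cast hm h) 0 (i.1 + 1) (by omega) hit
    rw [psum_zero] at h1
    push_cast at h1
    omega
  intro k
  induction k with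
  | zero =>
    intro _
    rw [if_pos (by omega), psum_zero, psum_zero]
    omega
  | succ k ih =>
    intro hkt
    have hklt : k < t := by omega
    have ihh := ih (by omega)
    rw [psum_succ' _ k hklt, ihh]
    have hNs := psum_succ' (fun h => (nvec h : ℤ)) k hklt
    have hnk : (0 : ℤ) ≤ (nvec ⟨k, hklt⟩ : ℤ) := Int.natCast_nonneg _
    by_cases hki : k ≤ i.1
    · have hle : (⟨k, hklt⟩ : Fin t) ≤ i := hki
      rw [show avec nvec mvec i ⟨k, hklt⟩ =
          (max 0 (min ((nvec ⟨k, hklt⟩ : ℤ))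
            (-1 + ∑ h ∈ Finset.Iic i, (mvec h : ℤ) -
              ∑ h ∈ Finset.Iio (⟨k, hklt⟩ : Fin t), (nvec h : ℤ)))).toNat
        from if_pos hle]
      rw [Int.toNat_of_nonneg (le_max_left _ _), sum_Iic_psum, sum_Iio_psum]
      rw [if_pos (by omega), if_pos (by omega)] at *
      omega
    · have hnle : ¬ ((⟨k, hklt⟩ : Fin t) ≤ i) := by
        simp only [Fin.le_def]; omega
      rw [show avec nvec mvec i ⟨k, hklt⟩ = nvec ⟨k, hklt⟩ from if_neg hnle]
      rw [if_neg (show ¬ (k + 1 ≤ i.1 + 1) by omega)]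
      have hMNi := hMN (i.1 + 1) (by omega) hit
      by_cases hk2 : k ≤ i.1 + 1
      · rw [if_pos hk2] at ihh
        have hkeq : k = i.1 + 1 := by omega
        subst hkeq
        push_cast at hMNi ⊢
        omega
      · rw [if_neg hk2] at ihh
        omega

end AuxSMLV

theorem shift_maximal_losing_vectors (t : ℕ) (ht : 1 ≤ t) (nvec mvec : Fin t → ℕ)
    (hn : ∀ h, 1 ≤ nvec h)
    (hm1 : 1 ≤ mvec ⟨0, ht⟩) (hm1' : mvec ⟨0, ht⟩ ≤ nvec ⟨0, ht⟩)
    (hmid : ∀ h : Fin t, 1 ≤ (h : ℕ) → (h : ℕ) ≤ t - 2 → 1 ≤ mvec h ∧ mvec h ≤ nvec h - 1)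
    (hlast : 2 ≤ t → mvec ⟨t - 1, by omega⟩ ≤ nvec ⟨t - 1, by omega⟩ - 1)
    (hnonull : 1 ≤ mvec ⟨t - 1, by omega⟩) :
    ∀ x : Fin t → ℕ, IsShiftMaxLosing nvec mvec x ↔ ∃ i : Fin t, x = avec nvec mvec i := by
  have hm_all : ∀ h : Fin t, 1 ≤ mvec h := by
    intro h
    have h2 := h.2
    rcases Nat.lt_or_ge h.1 1 with h0 | h1
    · have he : h = ⟨0, ht⟩ := Fin.ext (show (h : ℕ) = 0 by omega)
      rw [he]; exact hm1
    · rcases Nat.lt_or_ge h.1 (t - 1) with hlt | hge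
      · exact (hmid h h1 (by omega)).1
      · have he : h = ⟨t - 1, by omega⟩ := Fin.ext (show (h : ℕ) = t - 1 by omega)
        rw [he]; exact hnonull
  have hm_allz : ∀ h : Fin t, (1 : ℤ) ≤ (mvec h : ℤ) := fun h => by exact_mod_cast hm_all h
  have hmn_all : ∀ h : Fin t, 1 ≤ h.1 → (mvec h : ℤ) + 1 ≤ (nvec h : ℤ) := by
    intro h h1
    have h2 := h.2
    have h3 := hn h
    rcases Nat.lt_or_ge h.1 (t - 1) with hlt | hge
    · have h5 := (hmid h h1 (by omega)).2
      have h4 : mvec h + 1 ≤ nvec h := by omega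
      exact_mod_cast h4
    · have he : h = ⟨t - 1, by omega⟩ := Fin.ext (show (h : ℕ) = t - 1 by omega)
      have h5 : mvec h ≤ nvec h - 1 := by rw [he]; exact hlast (by omega)
      have h4 : mvec h + 1 ≤ nvec h := by omega
      exact_mod_cast h4
  have hMN : ∀ k, 1 ≤ k → k ≤ t →
      psum (fun h => (mvec h : ℤ)) k + ((k : ℤ) - 1) ≤ psum (fun h => (nvec h : ℤ)) k := by
    intro k hk1 hkt
    have hg := psum_gap hmn_all 1 k (le_refl 1) hk1 hkt
    have e1 := psum_succ' (fun h => (mvec h : ℤ)) 0 ht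
    have e2 := psum_succ' (fun h => (nvec h : ℤ)) 0 ht
    rw [psum_zero] at e1 e2
    simp only [zero_add] at e1 e2
    have h1 : (mvec ⟨0, ht⟩ : ℤ) ≤ (nvec ⟨0, ht⟩ : ℤ) := by exact_mod_cast hm1'
    rw [e1, e2] at hg
    push_cast at hg
    omega
  have hWA := avec_psum nvec mvec hn hm_all hMN
  have hbridge : ∀ (v w : Fin t → ℕ) (k : Fin t),
      ((∑ h ∈ Finset.Iic k, v h) ≤ ∑ h ∈ Finset.Iic k, w h) ↔
      psum (fun h => (v h : ℤ)) (k.1 + 1) ≤ psum (fun h => (w h : ℤ)) (k.1 + 1) := by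
    intro v w k
    rw [← sum_Iic_psum (fun h => (v h : ℤ)) k, ← sum_Iic_psum (fun h => (w h : ℤ)) k]
    rw [show (∑ h ∈ Finset.Iic k, ((v h : ℤ))) = ((∑ h ∈ Finset.Iic k, v h : ℕ) : ℤ) from
        (Nat.cast_sum _ _).symm,
      show (∑ h ∈ Finset.Iic k, ((w h : ℤ))) = ((∑ h ∈ Finset.Iic k, w h : ℕ) : ℤ) from
        (Nat.cast_sum _ _).symm]
    exact Nat.cast_le.symm
  have hxN : ∀ (v : Fin t → ℕ), (∀ j, v j ≤ nvec j) → ∀ q : ℕ,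
      psum (fun h => (v h : ℤ)) q ≤ psum (fun h => (nvec h : ℤ)) q := by
    intro v hv q
    have h1 := psum_diff_le (f := fun h => ((v h : ℤ))) (g := fun h => ((nvec h : ℤ)))
      (fun h => show ((v h : ℤ)) ≤ (nvec h : ℤ) by exact_mod_cast hv h) 0 q (Nat.zero_le _)
    rw [psum_zero, psum_zero] at h1
    omega
  have hvmono : ∀ (v : Fin t → ℕ) {j k : ℕ}, j ≤ k →
      psum (fun h => (v h : ℤ)) j ≤ psum (fun h => (v h : ℤ)) k :=
    fun v {j k} hjk => psum_mono (fun h => Int.natCast_nonneg _) hjk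
  have hAle : ∀ (i j : Fin t), avec nvec mvec i j ≤ nvec j := by
    intro i j
    unfold avec
    split
    · exact Int.toNat_le.mpr (max_le (Int.natCast_nonneg _) (min_le_left _ _))
    · exact le_refl _
  have hAlose : ∀ i : Fin t, ¬ VecWinning mvec (avec nvec mvec i) := by
    intro i hw
    have h1 := (hbridge mvec (avec nvec mvec i) i).mp (hw i)
    have h2 := hWA i (i.1 + 1) i.2
    rw [if_pos (le_refl _)] at h2
    omega
  intro x
  constructor
  · rintro ⟨hxn, hxlose, hxmax⟩
    simp only [VecWinning, not_forall, not_le] at hxlose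
    obtain ⟨i, hi⟩ := hxlose
    have hi' : psum (fun h => (x h : ℤ)) (i.1 + 1) + 1 ≤ psum (fun h => (mvec h : ℤ)) (i.1 + 1) := by
      have h3 : ¬ psum (fun h => (mvec h : ℤ)) (i.1 + 1) ≤ psum (fun h => (x h : ℤ)) (i.1 + 1) := by
        rw [← hbridge mvec x i]
        exact not_le.mpr hi
      omega
    refine ⟨i, ?_⟩
    have hxle : VecLE x (avec nvec mvec i) := by
      intro k
      rw [hbridge x (avec nvec mvec i) k]
      have hAk := hWA i (k.1 + 1) k.2
      have hxNk := hxN x hxn (k.1 + 1)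
      by_cases hk : k.1 + 1 ≤ i.1 + 1
      · rw [if_pos hk] at hAk
        have h2 := hvmono x (show k.1 + 1 ≤ i.1 + 1 from hk)
        omega
      · rw [if_neg hk] at hAk
        have h2 := psum_diff_le (f := fun h => ((x h : ℤ))) (g := fun h => ((nvec h : ℤ)))
          (fun h => show ((x h : ℤ)) ≤ (nvec h : ℤ) by exact_mod_cast hxn h)
          (i.1 + 1) (k.1 + 1) (by omega)
        omega
    by_contra hne
    exact hAlose i (hxmax (avec nvec mvec i) (hAle i) hxle (fun hEq => hne hEq.symm))
  · rintro ⟨i, rfl⟩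
    refine ⟨hAle i, hAlose i, ?_⟩
    intro y hyn hle hne
    have hyA : ∀ q : ℕ, 1 ≤ q → q ≤ t →
        psum (fun h => ((avec nvec mvec i h : ℕ) : ℤ)) q ≤ psum (fun h => (y h : ℤ)) q := by
      intro q h1 h2
      have h3 := (hbridge (avec nvec mvec i) y ⟨q - 1, by omega⟩).mp (hle ⟨q - 1, by omega⟩)
      simpa [show q - 1 + 1 = q from by omega] using h3
    intro k
    rw [hbridge mvec y k]
    have hAk := hWA i (k.1 + 1) k.2
    by_cases hk : k.1 = i.1
    · by_contra hlt
      push_neg at hlt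
      obtain rfl : k = i := Fin.ext hk
      rw [if_pos (le_refl _)] at hAk
      have hMNi := hMN (k.1 + 1) (by omega) k.2
      have h0 := hyA (k.1 + 1) (by omega) k.2
      have hSy : psum (fun h => (y h : ℤ)) (k.1 + 1) =
          psum (fun h => (mvec h : ℤ)) (k.1 + 1) - 1 := by omega
      apply hne
      funext j
      have hSA : ∀ q, q ≤ t → psum (fun h => (y h : ℤ)) q =
          psum (fun h => ((avec nvec mvec k h : ℕ) : ℤ)) q := by
        intro q hqt
        rcases Nat.eq_zero_or_pos q with rfl | hq
        · rw [psum_zero, psum_zero]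
        · have hAq := hWA k q hqt
          have hyAq := hyA q hq hqt
          by_cases hqi : q ≤ k.1 + 1
          · rw [if_pos hqi] at hAq
            have h2 := hvmono y (show q ≤ k.1 + 1 from hqi)
            have h3 := hxN y hyn q
            omega
          · rw [if_neg hqi] at hAq
            have h4 := psum_diff_le (f := fun h => ((y h : ℤ))) (g := fun h => ((nvec h : ℤ)))
              (fun h => show ((y h : ℤ)) ≤ (nvec h : ℤ) by exact_mod_cast hyn h)
              (k.1 + 1) q (by omega)
            omega
      have e1 := hSA j.1 (by omega)
      have e2 := hSA (j.1 + 1) j.2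
      have e3 := psum_succ' (fun h => (y h : ℤ)) j.1 j.2
      have e4 := psum_succ' (fun h => ((avec nvec mvec k h : ℕ) : ℤ)) j.1 j.2
      simp only [Fin.eta] at e3 e4
      have h9 : (y j : ℤ) = ((avec nvec mvec k j : ℕ) : ℤ) := by omega
      exact_mod_cast h9
    · have h1 := hyA (k.1 + 1) (by omega) k.2
      by_cases hik : k.1 < i.1
      · rw [if_pos (by omega)] at hAk
        have h2 := psum_ge_count (f := fun h => (mvec h : ℤ)) hm_allz
          (k.1 + 1) (i.1 + 1) (by omega) i.2
        have h3 := hMN (k.1 + 1) (by omega) k.2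
        push_cast at h2
        omega
      · rw [if_neg (by omega)] at hAk
        have h2 := psum_gap hmn_all (i.1 + 1) (k.1 + 1) (by omega) (by omega) k.2
        push_cast at h2
        omega
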